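/- arXiv:1606.05100 — 2 statements merged into one kernel-verified Lean document; each statement's English description precedes it below -/
import Mathlib

section
/- Let Σ = A C Aᵀ + Γ where A is the assignment matrix of a partition G = {G_1,...,G_K} of {1,...,p} (A_{ak} = 1 iff a ∈ G_k), C is symmetric positive semidefinite, and Γ is diagonal with Γ_{aa} = γ_k for a ∈ G_k. Let m = min_k |G_k| and suppose Δ(C) := min_{j<k}(C_{jj}+C_{kk}−2C_{jk}) > (2/m)(max_k γ_k − min_k γ_k). Then B* is the unique maximizer of B ↦ ⟨Σ, B⟩ over the convex set 𝒞 = {B symmetric PSD, nonnegative entries, row sums 1, trace K}. -/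
open Finset

/-- The normalized partnership matrix of the partition given by assignment `g`. -/
noncomputable def Bstar (p K : ℕ) (g : Fin p → Fin K) : Matrix (Fin p) (Fin p) ℝ :=
  fun a b => if g a = g b then ((Finset.univ.filter (fun c => g c = g a)).card : ℝ)⁻¹ else 0

/-- The convex set 𝒞. -/
def memC (p K : ℕ) (B : Matrix (Fin p) (Fin p) ℝ) : Prop :=
  B.PosSemidef ∧ (∀ a b, 0 ≤ B a b) ∧ (∀ a, ∑ b, B a b = 1) ∧ B.trace = (K : ℝ)

/-!
Write `s_jk` for the entry sums of the blocks of `B ∈ 𝒞` and `t_k` for the traces of its diagonal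
blocks. Since the rows of `B` sum to one, `Σ_k s_jk = |G_j|`, which turns `⟨ACAᵀ, B* - B⟩` into
`Σ_{j≠k} (C_jj + C_kk - 2 C_jk)/2 · s_jk`. Positive semidefiniteness gives `s_kk ≤ |G_k| t_k`, so
`|G_k| (1 - t_k) ≤ Σ_{j≠k} s_kj`; as `Σ_k t_k = K`, this bounds
`⟨Γ, B - B*⟩ = Σ_k (γ_max - γ_k)(1 - t_k)` by `(γ_max - γ_min)/m · Σ_{j≠k} s_jk`. Hence
`⟨Σ, B* - B⟩ ≥ Σ_{j≠k} (Δ_jk/2 - (γ_max - γ_min)/m) s_jk`, which is positive unless every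
off-diagonal block of `B` vanishes, and then the equality cases of the two semidefiniteness
inequalities force `B = B*`.
-/

open Matrix

namespace Matrix.PosSemidef

variable {n : Type*} [Fintype n] {B : Matrix n n ℝ}

lemma two_mul_apply_le (hB : B.PosSemidef) (a b : n) : 2 * B a b ≤ B a a + B b b := by
  classical
  have h := hB.dotProduct_mulVec_nonneg (Pi.single a 1 - Pi.single b 1)
  have hba : B b a = B a b := hB.isHermitian.apply a b
  simp [mulVec_sub, dotProduct_sub, sub_dotProduct, mulVec_single] at h
  linarith

/-- Equality forces `B (eₐ - e_b) = 0`, whose `a`-th coordinate is `B a a - B a b`. -/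
lemma apply_eq_of_two_mul_eq (hB : B.PosSemidef) {a b : n} (h : 2 * B a b = B a a + B b b) :
    B a b = B a a := by
  classical
  have hba : B b a = B a b := hB.isHermitian.apply a b
  have hker := (hB.dotProduct_mulVec_zero_iff (Pi.single a 1 - Pi.single b 1)).mp (by
    simp [mulVec_sub, dotProduct_sub, sub_dotProduct, mulVec_single]
    linarith)
  have ha := congrFun hker a
  simp [mulVec_sub, mulVec_single] at ha
  linarith

end Matrix.PosSemidef

section Blocks

variable {ι κ : Type*} [Fintype ι] [DecidableEq κ] (g : ι → κ) (B : Matrix ι ι ℝ)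

/-- The paper's `|B_{G_j G_k}|₁`, for the groups `G_j = g⁻¹' {j}` and `G_k = g⁻¹' {k}`. -/
noncomputable def blockSum (j k : κ) : ℝ := ∑ a with g a = j, ∑ b with g b = k, B a b

noncomputable def blockTrace (k : κ) : ℝ := ∑ a with g a = k, B a a

variable {g B}

lemma blockSum_comm (hB : B.IsSymm) (j k : κ) : blockSum g B j k = blockSum g B k j := by
  rw [blockSum, blockSum, sum_comm (f := fun a b => B a b)]
  exact sum_congr rfl fun a _ => sum_congr rfl fun b _ => hB.apply a b

lemma blockSum_nonneg (hB : ∀ a b, 0 ≤ B a b) (j k : κ) : 0 ≤ blockSum g B j k :=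
  sum_nonneg fun a _ => sum_nonneg fun b _ => hB a b

lemma sum_sum_add_sub_two_mul (k : κ) :
    ∑ a with g a = k, ∑ b with g b = k, (B a a + B b b - 2 * B a b)
      = 2 * (#{a | g a = k} * blockTrace g B k - blockSum g B k k) := by
  simp only [sum_sub_distrib, sum_add_distrib, sum_const, nsmul_eq_mul, ← mul_sum, blockTrace,
    blockSum]
  ring

lemma blockSum_self_le (hB : B.PosSemidef) (k : κ) :
    blockSum g B k k ≤ #{a | g a = k} * blockTrace g B k := by
  have hsum := sum_sum_add_sub_two_mul (g := g) (B := B) k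
  have hnonneg : 0 ≤ ∑ a with g a = k, ∑ b with g b = k, (B a a + B b b - 2 * B a b) :=
    sum_nonneg fun a _ => sum_nonneg fun b _ => by linarith [hB.two_mul_apply_le a b]
  linarith

lemma card_filter_eq_pos (hg : Function.Surjective g) (k : κ) : 0 < #{a | g a = k} := by
  obtain ⟨a, rfl⟩ := hg k
  exact card_pos.2 ⟨a, by simp⟩

lemma apply_eq_zero_of_blockSum_eq_zero (hnn : ∀ a b, 0 ≤ B a b) {a b : ι}
    (h : blockSum g B (g a) (g b) = 0) : B a b = 0 := by
  rw [blockSum, sum_eq_zero_iff_of_nonneg fun _ _ => sum_nonneg fun _ _ => hnn _ _] at h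
  exact (sum_eq_zero_iff_of_nonneg fun _ _ => hnn _ _).1 (h a (by simp)) b (by simp)

lemma apply_eq_apply_self_of_blockSum_eq (hB : B.PosSemidef) {k : κ}
    (hk : blockSum g B k k = #{a | g a = k} * blockTrace g B k) {a b : ι} (ha : g a = k)
    (hb : g b = k) : B a b = B a a := by
  have hsum := sum_sum_add_sub_two_mul (g := g) (B := B) k
  rw [hk, sub_self, mul_zero, sum_eq_zero_iff_of_nonneg fun a _ =>
    sum_nonneg fun b _ => by linarith [hB.two_mul_apply_le a b]] at hsum
  have hab := (sum_eq_zero_iff_of_nonneg fun b _ => by linarith [hB.two_mul_apply_le a b]).1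
    (hsum a (by simpa using ha)) b (by simpa using hb)
  exact hB.apply_eq_of_two_mul_eq (by linarith)

variable [Fintype κ]

lemma sum_sum_mul_blockSum (F : κ → κ → ℝ) :
    ∑ j, ∑ k, F j k * blockSum g B j k = ∑ a, ∑ b, F (g a) (g b) * B a b := by
  rw [← sum_fiberwise univ g]
  refine sum_congr rfl fun j _ => ?_
  simp only [blockSum, mul_sum]
  rw [sum_comm]
  refine sum_congr rfl fun a ha => ?_
  rw [← sum_fiberwise univ g, (mem_filter.mp ha).2]
  exact sum_congr rfl fun k _ => sum_congr rfl fun b hb => by rw [(mem_filter.mp hb).2]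

lemma sum_mul_blockTrace (f : κ → ℝ) :
    ∑ k, f k * blockTrace g B k = ∑ a, f (g a) * B a a := by
  rw [← sum_fiberwise univ g]
  refine sum_congr rfl fun k _ => ?_
  rw [blockTrace, mul_sum]
  exact sum_congr rfl fun a ha => by rw [(mem_filter.mp ha).2]

lemma sum_blockTrace : ∑ k, blockTrace g B k = B.trace :=
  sum_fiberwise univ g fun a => B a a

lemma sum_blockSum_right (hrow : ∀ a, ∑ b, B a b = 1) (j : κ) :
    ∑ k, blockSum g B j k = #{a | g a = j} := by
  simp only [blockSum]
  rw [sum_comm]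
  simp [sum_fiberwise, hrow]

lemma sum_erase_blockSum (hrow : ∀ a, ∑ b, B a b = 1) (j : κ) :
    ∑ k ∈ univ.erase j, blockSum g B j k = #{a | g a = j} - blockSum g B j j := by
  rw [sum_erase_eq_sub (mem_univ j), sum_blockSum_right hrow]

/-- With `∑ k, C k k * #{a | g a = k} = ⟨ACAᵀ, B*⟩`, this is the identity
`⟨ACAᵀ, B* - B⟩ = Σ_{j≠k} ((C_jj + C_kk)/2 - C_jk) |B_{G_j G_k}|₁`. -/
lemma sum_sum_mul_blockSum_eq (hB : B.IsSymm) (hrow : ∀ a, ∑ b, B a b = 1)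
    (C : Matrix κ κ ℝ) :
    ∑ j, ∑ k, C j k * blockSum g B j k = ∑ k, C k k * #{a | g a = k}
      - ∑ j, ∑ k ∈ univ.erase j, (C j j + C k k - 2 * C j k) / 2 * blockSum g B j k := by
  have hdiag : ∀ j, ∑ k ∈ univ.erase j, (C j j + C k k - 2 * C j k) / 2 * blockSum g B j k
      = ∑ k, (C j j + C k k - 2 * C j k) / 2 * blockSum g B j k :=
    fun j => sum_erase _ (by ring)
  have hrows : ∑ j, ∑ k, C j j * blockSum g B j k = ∑ k, C k k * #{a | g a = k} := by
    simp only [← mul_sum, sum_blockSum_right hrow]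
  have hcols : ∑ j, ∑ k, C k k * blockSum g B j k = ∑ k, C k k * #{a | g a = k} := by
    rw [sum_comm]
    simp only [← mul_sum, blockSum_comm hB _ (_ : κ), sum_blockSum_right hrow]
  have hsplit : ∀ j k, (C j j + C k k - 2 * C j k) / 2 * blockSum g B j k
      = C j j * blockSum g B j k / 2 + C k k * blockSum g B j k / 2
        - C j k * blockSum g B j k := fun j k => by ring
  rw [sum_congr rfl fun j _ => hdiag j]
  simp only [hsplit, sum_add_distrib, sum_sub_distrib, ← sum_div, hrows, hcols]
  ring

lemma one_sub_blockTrace_le (hB : B.PosSemidef) (hnn : ∀ a b, 0 ≤ B a b)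
    (hrow : ∀ a, ∑ b, B a b = 1) {m : ℝ} (hm : 0 < m) {k : κ} (hmk : m ≤ #{a | g a = k}) :
    1 - blockTrace g B k ≤ (∑ j ∈ univ.erase k, blockSum g B k j) / m := by
  rw [le_div_iff₀ hm, sum_erase_blockSum hrow]
  have := blockSum_self_le hB (g := g) k
  rcases le_total (blockTrace g B k) 1 with ht | ht
  · nlinarith
  · nlinarith [sum_nonneg fun j (_ : j ∈ univ.erase k) => blockSum_nonneg hnn (g := g) k j,
      sum_erase_blockSum hrow (g := g) k]

lemma sum_mul_blockTrace_le (hB : B.PosSemidef) (hnn : ∀ a b, 0 ≤ B a b)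
    (hrow : ∀ a, ∑ b, B a b = 1) (htr : B.trace = Fintype.card κ) {γ : κ → ℝ} {γmin γmax : ℝ}
    (hγ : ∀ k, γ k ∈ Set.Icc γmin γmax) {m : ℝ} (hm : 0 < m) (hmN : ∀ k, m ≤ #{a | g a = k}) :
    ∑ k, γ k * blockTrace g B k
      ≤ ∑ k, γ k + (γmax - γmin) / m * ∑ j, ∑ k ∈ univ.erase j, blockSum g B j k := by
  have htr' : ∑ k, (1 - blockTrace g B k) = 0 := by
    simp [sum_sub_distrib, sum_blockTrace, htr]
  have hshift : ∑ k, (γmax - γ k) * (1 - blockTrace g B k)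
      = γmax * ∑ k, (1 - blockTrace g B k) - ∑ k, γ k + ∑ k, γ k * blockTrace g B k := by
    simp only [mul_sum, ← sum_sub_distrib, ← sum_add_distrib]
    exact sum_congr rfl fun k _ => by ring
  have hterm : ∀ k, (γmax - γ k) * (1 - blockTrace g B k)
      ≤ (γmax - γmin) / m * ∑ j ∈ univ.erase k, blockSum g B k j := fun k =>
    calc (γmax - γ k) * (1 - blockTrace g B k)
        ≤ (γmax - γ k) * ((∑ j ∈ univ.erase k, blockSum g B k j) / m) :=
          mul_le_mul_of_nonneg_left (one_sub_blockTrace_le hB hnn hrow hm (hmN k))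
            (sub_nonneg.2 (hγ k).2)
      _ ≤ (γmax - γmin) * ((∑ j ∈ univ.erase k, blockSum g B k j) / m) :=
          mul_le_mul_of_nonneg_right (by linarith [(hγ k).1])
            (div_nonneg (sum_nonneg fun j _ => blockSum_nonneg hnn k j) hm.le)
      _ = (γmax - γmin) / m * ∑ j ∈ univ.erase k, blockSum g B k j := by ring
  have := sum_le_sum fun k (_ : k ∈ univ) => hterm k
  rw [hshift, htr', ← mul_sum] at this
  linarith

lemma sum_sum_mul_eq [DecidableEq ι] {S : Matrix ι ι ℝ} {C : Matrix κ κ ℝ} {γ : κ → ℝ}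
    (hS : ∀ a b, S a b = C (g a) (g b) + diagonal (fun c => γ (g c)) a b) :
    ∑ a, ∑ b, S a b * B a b
      = ∑ j, ∑ k, C j k * blockSum g B j k + ∑ k, γ k * blockTrace g B k := by
  rw [sum_sum_mul_blockSum (fun j k => C j k), sum_mul_blockTrace, ← sum_add_distrib]
  refine sum_congr rfl fun a _ => ?_
  simp [hS, add_mul, sum_add_distrib, diagonal_apply, ite_mul]

lemma sum_sum_mul_le [DecidableEq ι] {S : Matrix ι ι ℝ} {C : Matrix κ κ ℝ} {γ : κ → ℝ}
    (hS : ∀ a b, S a b = C (g a) (g b) + diagonal (fun c => γ (g c)) a b)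
    (hB : B.PosSemidef) (hnn : ∀ a b, 0 ≤ B a b) (hrow : ∀ a, ∑ b, B a b = 1)
    (htr : B.trace = Fintype.card κ) {γmin γmax : ℝ} (hγ : ∀ k, γ k ∈ Set.Icc γmin γmax)
    {m : ℝ} (hm : 0 < m) (hmN : ∀ k, m ≤ #{a | g a = k}) :
    ∑ a, ∑ b, S a b * B a b ≤ ∑ k, C k k * #{a | g a = k} + ∑ k, γ k
      - ∑ j, ∑ k ∈ univ.erase j,
          ((C j j + C k k - 2 * C j k) / 2 - (γmax - γmin) / m) * blockSum g B j k := by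
  have hΓ := sum_mul_blockTrace_le hB hnn hrow htr hγ hm hmN
  rw [sum_sum_mul_eq hS, sum_sum_mul_blockSum_eq (isHermitian_iff_isSymm.mp hB.isHermitian) hrow]
  simp only [sub_mul, sum_sub_distrib, ← mul_sum] at hΓ ⊢
  linarith

/-- The diagonal block sums are then the group sizes, which forces every `blockTrace` to be at
least one, and the traces add up to the number of groups. -/
lemma blockTrace_eq_one (hg : Function.Surjective g) (hB : B.PosSemidef)
    (hrow : ∀ a, ∑ b, B a b = 1) (htr : B.trace = Fintype.card κ)
    (hoff : ∀ j k, j ≠ k → blockSum g B j k = 0) (k : κ) : blockTrace g B k = 1 := by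
  have hge : ∀ k, 1 ≤ blockTrace g B k := fun k => by
    have hkk := sum_erase_blockSum hrow (g := g) k
    rw [sum_eq_zero fun j hj => hoff k j (ne_of_mem_erase hj).symm] at hkk
    have hN : (0 : ℝ) < #{a | g a = k} := by exact_mod_cast card_filter_eq_pos hg k
    nlinarith [blockSum_self_le hB (g := g) k]
  have hsum : ∑ k, blockTrace g B k = ∑ _k : κ, 1 := by simp [sum_blockTrace, htr]
  exact ((sum_eq_sum_iff_of_le fun k _ => hge k).1 hsum.symm k (mem_univ k)).symm

lemma sum_erase_mul_blockSum_pos (hnn : ∀ a b, 0 ≤ B a b) {w : κ → κ → ℝ}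
    (hw : ∀ j k, j ≠ k → 0 < w j k) (h : ∃ j k, j ≠ k ∧ blockSum g B j k ≠ 0) :
    0 < ∑ j, ∑ k ∈ univ.erase j, w j k * blockSum g B j k := by
  obtain ⟨j, k, hjk, hs⟩ := h
  have hterm : ∀ j, ∀ k ∈ univ.erase j, 0 ≤ w j k * blockSum g B j k := fun j k hk =>
    mul_nonneg (hw j k (ne_of_mem_erase hk).symm).le (blockSum_nonneg hnn j k)
  refine sum_pos' (fun j _ => sum_nonneg (hterm j)) ⟨j, mem_univ j, sum_pos' (hterm j) ?_⟩
  exact ⟨k, mem_erase.2 ⟨hjk.symm, mem_univ k⟩,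
    mul_pos (hw j k hjk) ((blockSum_nonneg hnn j k).lt_of_ne' hs)⟩

end Blocks

section Bstar

variable {p K : ℕ} {g : Fin p → Fin K}

lemma Bstar_apply (a b : Fin p) :
    Bstar p K g a b = if g a = g b then (#{c | g c = g a} : ℝ)⁻¹ else 0 := rfl

lemma posSemidef_Bstar : (Bstar p K g).PosSemidef := by
  let A : Matrix (Fin p) (Fin K) ℝ := of fun a k => if g a = k then 1 else 0
  have hA : Bstar p K g = A * diagonal (fun k => (#{a | g a = k} : ℝ)⁻¹) * Aᴴ := by
    ext a b
    simp only [A, Bstar_apply, mul_apply, diagonal_apply]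
    split_ifs with h <;> simp [h]
  rw [hA]
  exact (PosSemidef.diagonal fun k => by positivity).mul_mul_conjTranspose_same A

lemma sum_Bstar_apply (a : Fin p) : ∑ b, Bstar p K g a b = 1 := by
  have hN : (#{c | g c = g a} : ℝ) ≠ 0 := by exact_mod_cast (card_pos.2 ⟨a, by simp⟩).ne'
  simp only [Bstar_apply, eq_comm (a := g a), ← sum_filter, sum_const, nsmul_eq_mul]
  exact mul_inv_cancel₀ hN

lemma blockTrace_Bstar (hg : Function.Surjective g) (k : Fin K) :
    blockTrace g (Bstar p K g) k = 1 := by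
  rw [blockTrace, sum_congr rfl fun a ha => by rw [Bstar_apply, if_pos rfl, (mem_filter.1 ha).2],
    sum_const, nsmul_eq_mul, mul_inv_cancel₀]
  exact_mod_cast (card_filter_eq_pos hg k).ne'

lemma blockSum_Bstar_of_ne {j k : Fin K} (h : j ≠ k) : blockSum g (Bstar p K g) j k = 0 :=
  sum_eq_zero fun a ha => sum_eq_zero fun b hb => by
    rw [Bstar_apply, if_neg (by rwa [(mem_filter.1 ha).2, (mem_filter.1 hb).2])]

lemma Bstar_memC (hg : Function.Surjective g) : memC p K (Bstar p K g) := by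
  refine ⟨posSemidef_Bstar, fun a b => ?_, sum_Bstar_apply, ?_⟩
  · rw [Bstar_apply]
    split_ifs <;> positivity
  · simp [← sum_blockTrace (g := g), blockTrace_Bstar hg]

lemma sum_sum_mul_Bstar {S : Matrix (Fin p) (Fin p) ℝ} {C : Matrix (Fin K) (Fin K) ℝ}
    {γ : Fin K → ℝ} (hS : ∀ a b, S a b = C (g a) (g b) + diagonal (fun c => γ (g c)) a b)
    (hg : Function.Surjective g) :
    ∑ a, ∑ b, S a b * Bstar p K g a b = ∑ k, C k k * #{a | g a = k} + ∑ k, γ k := by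
  have hsymm := isHermitian_iff_isSymm.mp (posSemidef_Bstar (g := g)).isHermitian
  rw [sum_sum_mul_eq hS, sum_sum_mul_blockSum_eq hsymm sum_Bstar_apply,
    sum_eq_zero fun j _ => sum_eq_zero fun k hk => by
      rw [blockSum_Bstar_of_ne (ne_of_mem_erase hk).symm, mul_zero]]
  simp [blockTrace_Bstar hg]

lemma eq_Bstar_of_blockSum_eq_zero (hg : Function.Surjective g) {B : Matrix (Fin p) (Fin p) ℝ}
    (hB : memC p K B) (hoff : ∀ j k, j ≠ k → blockSum g B j k = 0) : B = Bstar p K g := by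
  obtain ⟨hpsd, hnn, hrow, htr⟩ := hB
  have htr' : B.trace = Fintype.card (Fin K) := by rw [htr, Fintype.card_fin]
  have hdiag : ∀ a b, g a = g b → B a b = B a a := fun a b hab => by
    refine apply_eq_apply_self_of_blockSum_eq hpsd ?_ rfl hab.symm
    have hkk := sum_erase_blockSum hrow (g := g) (g a)
    rw [sum_eq_zero fun j hj => hoff _ j (ne_of_mem_erase hj).symm] at hkk
    rw [blockTrace_eq_one hg hpsd hrow htr' hoff, mul_one]
    linarith
  have hself : ∀ a, B a a = (#{c | g c = g a} : ℝ)⁻¹ := fun a => by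
    have hfiber : ∑ b with g b = g a, B a b = 1 := by
      rw [sum_filter_of_ne fun b _ hb => ?_, hrow a]
      by_contra hne
      exact hb (apply_eq_zero_of_blockSum_eq_zero hnn (hoff _ _ (Ne.symm hne)))
    rw [sum_congr rfl fun b hb => hdiag a b (mem_filter.1 hb).2.symm, sum_const,
      nsmul_eq_mul] at hfiber
    exact eq_inv_of_mul_eq_one_right hfiber
  ext a b
  rw [Bstar_apply]
  split_ifs with hab
  · rw [hdiag a b hab, hself]
  · exact apply_eq_zero_of_blockSum_eq_zero hnn (hoff _ _ hab)

end Bstar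

theorem stmt_6_general (p K : ℕ) (g : Fin p → Fin K) (hg : Function.Surjective g)
    (C : Matrix (Fin K) (Fin K) ℝ)
    (γ : Fin K → ℝ)
    (m : ℕ)
    (hm : IsLeast {n : ℕ | ∃ j, n = (Finset.univ.filter (fun a => g a = j)).card} m)
    (γmax γmin : ℝ)
    (hmax : IsGreatest (Set.range γ) γmax) (hmin : IsLeast (Set.range γ) γmin)
    (S : Matrix (Fin p) (Fin p) ℝ)
    (hS : ∀ a b, S a b = C (g a) (g b) + (Matrix.diagonal (fun c => γ (g c))) a b)
    (hΔ : ∀ j k : Fin K, j ≠ k →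
      (2 / (m : ℝ)) * (γmax - γmin) < C j j + C k k - 2 * C j k) :
    memC p K (Bstar p K g) ∧
    ∀ B : Matrix (Fin p) (Fin p) ℝ, memC p K B → B ≠ Bstar p K g →
      ∑ a, ∑ b, S a b * B a b < ∑ a, ∑ b, S a b * Bstar p K g a b := by
  refine ⟨Bstar_memC hg, fun B hB hne => ?_⟩
  obtain ⟨hPSD, hnn, hrow, htr⟩ := hB
  obtain ⟨⟨j₀, hj₀⟩, hmN⟩ := hm
  have hm_pos : (0 : ℝ) < m := by rw [hj₀]; exact_mod_cast card_filter_eq_pos hg j₀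
  have hB_le := sum_sum_mul_le hS hPSD hnn hrow (by rw [htr, Fintype.card_fin])
    (fun k => ⟨hmin.2 ⟨k, rfl⟩, hmax.2 ⟨k, rfl⟩⟩) hm_pos fun k => by exact_mod_cast hmN ⟨k, rfl⟩
  have hcoef : ∀ j k, j ≠ k → 0 < (C j j + C k k - 2 * C j k) / 2 - (γmax - γmin) / m :=
    fun j k hjk => by
      have := hΔ j k hjk
      have : 2 / (m : ℝ) * (γmax - γmin) = 2 * ((γmax - γmin) / m) := by ring
      linarith
  have hoff : ∃ j k, j ≠ k ∧ blockSum g B j k ≠ 0 := by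
    by_contra! h
    exact hne (eq_Bstar_of_blockSum_eq_zero hg ⟨hPSD, hnn, hrow, htr⟩ h)
  have hgap := sum_erase_mul_blockSum_pos hnn hcoef hoff
  rw [sum_sum_mul_Bstar hS hg]
  linarith

/-- if Δ(C) > (2/m)|Γ|_V then B* is the unique maximizer of
B ↦ ⟨Σ, B⟩ over 𝒞, where Σ = A C Aᵀ + Γ. -/
theorem stmt_6 (p K : ℕ) (g : Fin p → Fin K) (hg : Function.Surjective g)
    (C : Matrix (Fin K) (Fin K) ℝ) (hC : C.PosSemidef)
    (γ : Fin K → ℝ)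
    (m : ℕ)
    (hm : IsLeast {n : ℕ | ∃ j, n = (Finset.univ.filter (fun a => g a = j)).card} m)
    (γmax γmin : ℝ)
    (hmax : IsGreatest (Set.range γ) γmax) (hmin : IsLeast (Set.range γ) γmin)
    (S : Matrix (Fin p) (Fin p) ℝ)
    (hS : ∀ a b, S a b = C (g a) (g b) + (Matrix.diagonal (fun c => γ (g c))) a b)
    (hΔ : ∀ j k : Fin K, j ≠ k →
      (2 / (m : ℝ)) * (γmax - γmin) < C j j + C k k - 2 * C j k) :
    memC p K (Bstar p K g) ∧
    ∀ B : Matrix (Fin p) (Fin p) ℝ, memC p K B → B ≠ Bstar p K g →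
      ∑ a, ∑ b, S a b * B a b < ∑ a, ∑ b, S a b * Bstar p K g a b :=
  stmt_6_general p K g hg C γ m hm γmax γmin hmax hmin S hS hΔ
end

section
/- Let B ∈ R^{p×p} be symmetric positive semidefinite with nonnegative entries, rows summing to 1, and trace K, and suppose its support is contained in the support of the partnership matrix B* of a partition G into K groups. Then for every k, the block B_{G_kG_k} has exactly one nonzero eigenvalue equal to 1 with eigenvector the all-ones vector, hence B_{G_kG_k} = 11ᵀ/|G_k| and B = B*. -/
/-!
`B*` is the orthogonal projection onto the vectors that are constant on each group. A matrix `B`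
supported on the diagonal blocks with unit row sums fixes these vectors, `B B* = B*`, so
`B - B* = (1 - B*) B (1 - B*)` is positive semidefinite. Its trace is `K - K = 0`, hence it vanishes.
-/

open Finset

open scoped Matrix ComplexOrder

namespace Matrix

theorem PosSemidef.sub_of_isIdempotentElem_of_mul_eq {n R : Type*} [Fintype n] [DecidableEq n]
    [Ring R] [PartialOrder R] [StarRing R] {A P : Matrix n n R} (hA : A.PosSemidef)
    (hP : P.IsHermitian) (hPP : IsIdempotentElem P) (hAP : A * P = P) : (A - P).PosSemidef := by
  have hPA : P * A = P := by
    simpa only [conjTranspose_mul, hA.isHermitian.eq, hP.eq] using congrArg (·ᴴ) hAP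
  have hconj : (1 - P)ᴴ * A * (1 - P) = A - P := by
    rw [conjTranspose_sub, conjTranspose_one, hP.eq, Matrix.sub_mul, Matrix.one_mul, hPA,
      Matrix.mul_sub, Matrix.mul_one, Matrix.sub_mul, hAP, hPP.eq]
    abel
  exact hconj ▸ hA.conjTranspose_mul_mul_same (1 - P)

theorem PosSemidef.eq_of_mul_eq_of_trace_eq {n 𝕜 : Type*} [Fintype n] [DecidableEq n] [RCLike 𝕜]
    {A P : Matrix n n 𝕜} (hA : A.PosSemidef) (hP : P.IsHermitian) (hPP : IsIdempotentElem P)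
    (hAP : A * P = P) (htr : A.trace = P.trace) : A = P :=
  sub_eq_zero.mp <| (hA.sub_of_isIdempotentElem_of_mul_eq hP hPP hAP).trace_eq_zero_iff.mp
    (by rw [trace_sub, htr, sub_self])

end Matrix

section Bstar

variable {p K : ℕ} {g : Fin p → Fin K}

theorem Bstar_apply_of_ne {a b : Fin p} (h : g a ≠ g b) : Bstar p K g a b = 0 := by
  simp [Bstar, h]

theorem Bstar_apply_congr_left {a c : Fin p} (h : g c = g a) (b : Fin p) :
    Bstar p K g c b = Bstar p K g a b := by
  simp [Bstar, h]

theorem Bstar_isHermitian (g : Fin p → Fin K) : (Bstar p K g).IsHermitian := by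
  ext a b
  by_cases h : g a = g b
  · simp [Bstar, h]
  · simp [Bstar, h, Ne.symm h]

theorem cast_card_fiber_ne_zero (g : Fin p → Fin K) (a : Fin p) : (#{c | g c = g a} : ℝ) ≠ 0 :=
  Nat.cast_ne_zero.mpr (card_ne_zero_of_mem (mem_filter.mpr ⟨mem_univ a, rfl⟩))

theorem sum_Bstar_row (g : Fin p → Fin K) (a : Fin p) : ∑ b, Bstar p K g a b = 1 := by
  simp only [Bstar, sum_ite, sum_const_zero, add_zero, sum_const, nsmul_eq_mul]
  simp_rw [eq_comm (a := g a)]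
  exact mul_inv_cancel₀ (cast_card_fiber_ne_zero g a)

theorem mul_Bstar {M : Matrix (Fin p) (Fin p) ℝ} (hsupp : ∀ a b, g a ≠ g b → M a b = 0)
    (hrow : ∀ a, ∑ b, M a b = 1) : M * Bstar p K g = Bstar p K g := by
  ext a b
  have hterm : ∀ c, M a c * Bstar p K g c b = M a c * Bstar p K g a b := fun c ↦ by
    by_cases h : g a = g c
    · rw [Bstar_apply_congr_left h.symm]
    · rw [hsupp a c h, zero_mul, zero_mul]
  rw [Matrix.mul_apply, sum_congr rfl fun c _ ↦ hterm c, ← sum_mul, hrow, one_mul]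

theorem isIdempotentElem_Bstar (g : Fin p → Fin K) : IsIdempotentElem (Bstar p K g) :=
  mul_Bstar (fun _ _ ↦ Bstar_apply_of_ne) (sum_Bstar_row g)

theorem trace_Bstar (hg : Function.Surjective g) : (Bstar p K g).trace = K := by
  have hfiber : ∀ k : Fin K, ∑ _a ∈ {c | g c = k}, (#{c | g c = k} : ℝ)⁻¹ = 1 := fun k ↦ by
    obtain ⟨a, rfl⟩ := hg k
    rw [sum_const, nsmul_eq_mul]
    exact mul_inv_cancel₀ (cast_card_fiber_ne_zero g a)
  simp only [Matrix.trace, Matrix.diag, Bstar, if_true]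
  rw [← sum_fiberwise' univ g fun k ↦ (#{c | g c = k} : ℝ)⁻¹, sum_congr rfl fun k _ ↦ hfiber k]
  simp

end Bstar

theorem stmt_19_general (p K : ℕ) (g : Fin p → Fin K) (hg : Function.Surjective g)
    (B : Matrix (Fin p) (Fin p) ℝ)
    (hPSD : B.PosSemidef)
    (hrow : ∀ a, ∑ b, B a b = 1) (htr : B.trace = (K : ℝ))
    (hsupp : ∀ a b, g a ≠ g b → B a b = 0) :
    (∀ a b, g a = g b →
        B a b = ((Finset.univ.filter (fun c => g c = g a)).card : ℝ)⁻¹) ∧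
    B = Bstar p K g := by
  have hB : B = Bstar p K g :=
    hPSD.eq_of_mul_eq_of_trace_eq (Bstar_isHermitian g) (isIdempotentElem_Bstar g)
      (mul_Bstar hsupp hrow) (htr.trans (trace_Bstar hg).symm)
  refine ⟨fun a b hab ↦ ?_, hB⟩
  rw [hB, Bstar, if_pos hab]

/-- a symmetric PSD matrix with nonnegative entries, rows summing to 1,
trace K and support contained in supp(B*) has each diagonal block equal to 11ᵀ/|G_k|,
hence equals B*. -/
theorem stmt_19 (p K : ℕ) (g : Fin p → Fin K) (hg : Function.Surjective g)
    (B : Matrix (Fin p) (Fin p) ℝ)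
    (hPSD : B.PosSemidef) (hpos : ∀ a b, 0 ≤ B a b)
    (hrow : ∀ a, ∑ b, B a b = 1) (htr : B.trace = (K : ℝ))
    (hsupp : ∀ a b, g a ≠ g b → B a b = 0) :
    (∀ a b, g a = g b →
        B a b = ((Finset.univ.filter (fun c => g c = g a)).card : ℝ)⁻¹) ∧
    B = Bstar p K g :=
  stmt_19_general p K g hg B hPSD hrow htr hsupp
end
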